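/- Assume the index sets are ordered, i.e. I1 = {1,…,l} and I0 = {l+1,…,n}, let φ : 𝒳^l × 𝒴^n → 𝒳^n be any decoder, and set ε ≡ Prob(φ(AX,Y) ≠ X). If ε > 0, then Σ_{i=l+1}^n H(C_i | C_1^{i−1}, Y) ≤ ε·(n + log(1/ε) + log e), where H denotes conditional Shannon entropy with logarithm base |𝒳| and log denotes the logarithm to the base |𝒳|. -/

import Mathlib

/-!
By the chain rule each summand is `H(C_1^i, Y) - H(C_1^{i-1}, Y)`, so the sum telescopes to
`H(C, Y) - H(C_1^l, Y)`. Since `T` is a bijection and `C_1^l = AX`, this equals `H(X | AX, Y)`, and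
Fano's inequality for the estimate `φ(AX, Y)` bounds it by `ε log |𝒳|^n + ε log (1/ε) + ε`. Fano's
inequality itself is Gibbs' inequality against a reference kernel concentrated on the estimate.
-/

open Finset

noncomputable def probOf {Ω : Type*} [Fintype Ω] (p : Ω → ℝ) (E : Set Ω) : ℝ :=
  ∑ ω, E.indicator p ω

noncomputable def condProb {Ω : Type*} [Fintype Ω] (p : Ω → ℝ) (E F : Set Ω) : ℝ :=
  probOf p (E ∩ F) / probOf p F

noncomputable def entropyOf {Ω Z : Type*} [Fintype Ω] [Fintype Z] (p : Ω → ℝ) (V : Ω → Z) : ℝ :=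
  ∑ z, Real.negMulLog (probOf p {ω | V ω = z})

noncomputable def condEntropyOf {Ω U V : Type*} [Fintype Ω] [Fintype U] [Fintype V]
    (p : Ω → ℝ) (Uv : Ω → U) (Vv : Ω → V) : ℝ :=
  entropyOf p (fun ω => (Uv ω, Vv ω)) - entropyOf p Vv

def prefixVec {𝒳 : Type*} {n : ℕ} (c : Fin n → 𝒳) (m : ℕ) (h : m ≤ n) : Fin m → 𝒳 :=
  fun k => c ⟨k.1, lt_of_lt_of_le k.2 h⟩

def scVecGo {𝒳 : Type*} {n : ℕ} (g : (i : Fin n) → (Fin i.1 → 𝒳) → 𝒳) :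
    (k : ℕ) → k < n → 𝒳
  | k, hk => g ⟨k, hk⟩ (fun j => scVecGo g j.1 (j.2.trans hk))
termination_by k _ => k
decreasing_by exact j.2

def scVec {𝒳 : Type*} {n : ℕ} (g : (i : Fin n) → (Fin i.1 → 𝒳) → 𝒳) : Fin n → 𝒳 :=
  fun i => scVecGo g i.1 i.2

def scDec {𝒳 𝒴 : Type*} {n l : ℕ}
    (I1 : Finset (Fin n)) (hc1 : I1.card = l)
    (f : (i : Fin n) → (Fin i.1 → 𝒳) → (Fin n → 𝒴) → 𝒳)
    (c : Fin l → 𝒳) (y : Fin n → 𝒴) : Fin n → 𝒳 :=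
  scVec (fun i pref => if h : i ∈ I1 then c ((I1.orderIsoOfFin hc1).symm ⟨i, h⟩) else f i pref y)

def scDecOrd {𝒳 𝒴 : Type*} {n l : ℕ}
    (f : (i : Fin n) → (Fin i.1 → 𝒳) → (Fin n → 𝒴) → 𝒳)
    (c : Fin l → 𝒳) (y : Fin n → 𝒴) : Fin n → 𝒳 :=
  scVec (fun i pref => if h : i.1 < l then c ⟨i.1, h⟩ else f i pref y)

open Real

lemma negMulLog_add_mul_log_le {a b : ℝ} (ha : 0 ≤ a) (hb : 0 < b) :
    negMulLog a + a * log b ≤ b - a := by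
  have h : negMulLog a + a * log b = b * negMulLog (a / b) := by
    rw [div_eq_mul_inv, negMulLog_mul]
    simp only [negMulLog, log_inv]
    field_simp
  rw [h]
  calc b * negMulLog (a / b) ≤ b * (1 - a / b) :=
        mul_le_mul_of_nonneg_left (negMulLog_le_one_sub_self (div_nonneg ha hb.le)) hb.le
    _ = b - a := by field_simp

section
variable {Ω S T : Type*} [Fintype Ω] [Fintype S] [Fintype T] {p : Ω → ℝ}

noncomputable def law (p : Ω → ℝ) {Z : Type*} (V : Ω → Z) (z : Z) : ℝ := probOf p {ω | V ω = z}

lemma probOf_nonneg (hp : ∀ ω, 0 ≤ p ω) (E : Set Ω) : 0 ≤ probOf p E :=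
  Finset.sum_nonneg fun ω _ => Set.indicator_nonneg (fun a _ => hp a) ω

lemma probOf_le_sum (hp : ∀ ω, 0 ≤ p ω) (E : Set Ω) : probOf p E ≤ ∑ ω, p ω :=
  Finset.sum_le_sum fun ω _ => Set.indicator_le_self' (fun a _ => hp a) ω

lemma law_nonneg {Z : Type*} (hp : ∀ ω, 0 ≤ p ω) (V : Ω → Z) (z : Z) : 0 ≤ law p V z :=
  probOf_nonneg hp _

lemma probOf_preimage_eq_sum {Z : Type*} [Fintype Z] (V : Ω → Z) (s : Set Z)
    [DecidablePred (· ∈ s)] :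
    probOf p {ω | V ω ∈ s} = ∑ z, if z ∈ s then law p V z else 0 := by
  classical
  simp only [law, probOf, Set.indicator_apply, Set.mem_ofPred_eq]
  rw [← Finset.sum_fiberwise Finset.univ V]
  refine Finset.sum_congr rfl fun z _ => ?_
  rw [Finset.sum_filter]
  split_ifs with hz
  · exact Finset.sum_congr rfl fun ω _ => by by_cases h : V ω = z <;> simp [h, hz]
  · exact Finset.sum_eq_zero fun ω _ => by by_cases h : V ω = z <;> simp [h, hz]

lemma sum_law {Z : Type*} [Fintype Z] (V : Ω → Z) : ∑ z, law p V z = ∑ ω, p ω := by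
  classical
  simpa [probOf] using (probOf_preimage_eq_sum (p := p) V Set.univ).symm

lemma sum_law_pair (X : Ω → S) (W : Ω → T) (w : T) :
    ∑ x, law p (fun ω => (X ω, W ω)) (x, w) = law p W w := by
  classical
  have h := probOf_preimage_eq_sum (p := p) (fun ω => (X ω, W ω)) {z | z.2 = w}
  rw [Fintype.sum_prod_type_right] at h
  simpa [law] using h.symm

lemma law_pair_le (hp : ∀ ω, 0 ≤ p ω)
    (X : Ω → S) (W : Ω → T) (z : S × T) : law p (fun ω => (X ω, W ω)) z ≤ law p W z.2 := by
  obtain ⟨x, w⟩ := z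
  rw [← sum_law_pair X W w]
  exact Finset.single_le_sum (f := fun x => law p _ (x, w)) (fun _ _ => law_nonneg hp _ _)
    (Finset.mem_univ x)

lemma entropyOf_comp_injective {Z Z' : Type*} [Fintype Z] [Fintype Z'] (V : Ω → Z)
    {f : Z → Z'} (hf : f.Injective) : entropyOf p (fun ω => f (V ω)) = entropyOf p V := by
  refine (Fintype.sum_of_injective f hf _ _ (fun z' hz' => ?_) fun z => ?_).symm
  · have : {ω | f (V ω) = z'} = ∅ := Set.eq_empty_of_forall_notMem fun ω h => hz' ⟨V ω, h⟩
    simp [this, probOf]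
  · simp only [hf.eq_iff]

lemma condEntropyOf_eq_sum (X : Ω → S) (W : Ω → T) :
    condEntropyOf p X W = ∑ z, (negMulLog (law p (fun ω => (X ω, W ω)) z) +
      law p (fun ω => (X ω, W ω)) z * log (law p W z.2)) := by
  have hW : ∑ z, law p (fun ω => (X ω, W ω)) z * log (law p W z.2) = -entropyOf p W := by
    rw [Fintype.sum_prod_type_right]
    simp only [← Finset.sum_mul, sum_law_pair]
    simp [entropyOf, negMulLog, law]
  rw [condEntropyOf, Finset.sum_add_distrib, hW, sub_eq_add_neg]
  rfl

lemma condEntropyOf_add_sum_law_mul_log_le (hp : ∀ ω, 0 ≤ p ω) (X : Ω → S) (W : Ω → T)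
    (r : S × T → ℝ) (hr : ∀ z, 0 < r z) (hr1 : ∀ w, ∑ x, r (x, w) ≤ 1) :
    condEntropyOf p X W + ∑ z, law p (fun ω => (X ω, W ω)) z * log (r z) ≤ 0 := by
  set P := law p (fun ω => (X ω, W ω))
  set Q := law p W
  have hterm : ∀ z, negMulLog (P z) + P z * log (Q z.2) + P z * log (r z) ≤ Q z.2 * r z - P z := by
    intro z
    rcases (law_nonneg hp W z.2 : 0 ≤ Q z.2).eq_or_lt with hQ | hQ
    · have hP : P z = 0 := le_antisymm (hQ ▸ law_pair_le hp X W z) (law_nonneg hp _ z)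
      simpa [hP] using mul_nonneg (law_nonneg hp W z.2) (hr z).le
    · rw [add_assoc, ← mul_add, ← log_mul hQ.ne' (hr z).ne']
      exact negMulLog_add_mul_log_le (law_nonneg hp _ z) (mul_pos hQ (hr z))
  calc condEntropyOf p X W + ∑ z, P z * log (r z)
      ≤ ∑ z, (Q z.2 * r z - P z) := by
        rw [condEntropyOf_eq_sum, ← Finset.sum_add_distrib]
        exact Finset.sum_le_sum fun z _ => hterm z
    _ = ∑ w, Q w * (∑ x, r (x, w) - 1) := by
        simp only [Fintype.sum_prod_type_right, Finset.sum_sub_distrib, ← Finset.mul_sum, P,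
          sum_law_pair, mul_sub, mul_one]
        rfl
    _ ≤ 0 := Finset.sum_nonpos fun w _ =>
        mul_nonpos_of_nonneg_of_nonpos (law_nonneg hp W w) (by linarith [hr1 w])

theorem condEntropyOf_le_fano [Nonempty S] (hp0 : ∀ ω, 0 ≤ p ω) (hp1 : ∑ ω, p ω = 1)
    (X : Ω → S) (W : Ω → T) (g : T → S) {ε : ℝ} (hε : probOf p {ω | g (W ω) ≠ X ω} = ε)
    (hpos : 0 < ε) :
    condEntropyOf p X W ≤ ε * log (Fintype.card S) + ε * log (1 / ε) + ε := by
  classical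
  set N : ℝ := (Fintype.card S : ℝ)
  set P := law p (fun ω => (X ω, W ω))
  have hN : 1 ≤ N := Nat.one_le_cast.mpr Fintype.card_pos
  have hε1 : ε ≤ 1 := hε ▸ hp1 ▸ probOf_le_sum hp0 _
  have hN0 : (Fintype.card S : ℝ) ≠ 0 := by positivity
  have hεN : 0 < ε / N := div_pos hpos (by linarith)
  have hεN_le : ε / N ≤ ε := div_le_self hpos.le hN
  set s := ε / N + (1 - ε)
  have hs0 : 0 < s := by linarith
  have hs1 : s ≤ 1 := by linarith
  set E : Set (S × T) := {z | g z.2 ≠ z.1}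
  have hPE : ∑ z, (if z ∈ E then P z else 0) = ε :=
    (probOf_preimage_eq_sum (fun ω => (X ω, W ω)) E).symm.trans hε
  -- reference kernel: mass `1 - ε + ε/N` on the estimate `g w`, `ε/N` on every other point
  set r : S × T → ℝ := fun z => ε / N + if g z.2 = z.1 then 1 - ε else 0
  have hr : ∀ z, 0 < r z := fun z => by
    by_cases h : g z.2 = z.1 <;> simp only [r, h, if_true, if_false] <;> linarith
  have hr1 : ∀ w, ∑ x, r (x, w) ≤ 1 := fun w => by
    simp [r, Finset.sum_add_distrib, N, mul_div_cancel₀ _ hN0]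
  have hlog_r : ∑ z, P z * log (r z) = log s + ε * (log (ε / N) - log s) := by
    have hz : ∀ z, P z * log (r z) =
        P z * log s + (if z ∈ E then P z else 0) * (log (ε / N) - log s) :=
      fun z => by
        by_cases h : g z.2 = z.1
        · simp [r, E, h, s]
        · simp [r, E, h]
          ring
    rw [Finset.sum_congr rfl fun z _ => hz z, Finset.sum_add_distrib, ← Finset.sum_mul,
      ← Finset.sum_mul, hPE, sum_law, hp1, one_mul]
  have hgibbs := condEntropyOf_add_sum_law_mul_log_le hp0 X W r hr hr1
  have hcorrect : (1 - ε) * -log s ≤ ε :=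
    calc (1 - ε) * -log s ≤ s * -log s :=
          mul_le_mul_of_nonneg_right (by linarith) (neg_nonneg.mpr (log_nonpos hs0.le hs1))
      _ = negMulLog s := by rw [negMulLog]; ring
      _ ≤ 1 - s := negMulLog_le_one_sub_self hs0.le
      _ ≤ ε := by linarith
  calc condEntropyOf p X W ≤ -∑ z, P z * log (r z) := by linarith
    _ = (1 - ε) * -log s + ε * log N + ε * log (1 / ε) := by
        rw [hlog_r, log_div hpos.ne' hN0, one_div, log_inv]
        ring
    _ ≤ ε * log N + ε * log (1 / ε) + ε := by linarith

end

section
variable {Ω 𝒳 𝒴 : Type*} [Fintype Ω] [Fintype 𝒳] [Fintype 𝒴] {p : Ω → ℝ} {n : ℕ}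

lemma condEntropyOf_apply_prefixVec (c : Ω → Fin n → 𝒳) (Y : Ω → 𝒴) (i : Fin n) :
    condEntropyOf p (fun ω => c ω i) (fun ω => (prefixVec (c ω) i.1 i.2.le, Y ω)) =
      entropyOf p (fun ω => (prefixVec (c ω) (i.1 + 1) i.2, Y ω)) -
        entropyOf p (fun ω => (prefixVec (c ω) i.1 i.2.le, Y ω)) := by
  rw [condEntropyOf]
  congr 1
  exact entropyOf_comp_injective (fun ω => (prefixVec (c ω) (i.1 + 1) i.2, Y ω))
    (((Equiv.prodCongr (Fin.snocEquiv fun _ => 𝒳).symm (Equiv.refl 𝒴)).trans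
      (Equiv.prodAssoc _ _ _)).injective)

lemma sum_condEntropyOf_prefixVec {l : ℕ} (hl : l ≤ n) (c : Ω → Fin n → 𝒳) (Y : Ω → 𝒴) :
    ∑ i ∈ Finset.univ.filter (fun i : Fin n => l ≤ i.1),
        condEntropyOf p (fun ω => c ω i) (fun ω => (prefixVec (c ω) i.1 i.2.le, Y ω)) =
      entropyOf p (fun ω => (c ω, Y ω)) - entropyOf p (fun ω => (prefixVec (c ω) l hl, Y ω)) := by
  set F : ℕ → ℝ := fun m =>
    if h : m ≤ n then entropyOf p (fun ω => (prefixVec (c ω) m h, Y ω)) else 0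
  have hF : ∀ i : Fin n, condEntropyOf p (fun ω => c ω i)
      (fun ω => (prefixVec (c ω) i.1 i.2.le, Y ω)) = F (i.1 + 1) - F i.1 := fun i => by
    simp [F, i.2, i.2.le, condEntropyOf_apply_prefixVec]
  calc _ = ∑ i ∈ Finset.univ.filter (fun i : Fin n => l ≤ i.1), (F (i.1 + 1) - F i.1) :=
        Finset.sum_congr rfl fun i _ => hF i
    _ = ∑ k ∈ Finset.Ico l n, (F (k + 1) - F k) := by
        rw [Finset.sum_filter,
          Fin.sum_univ_eq_sum_range (fun k => if l ≤ k then F (k + 1) - F k else 0),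
          ← Finset.sum_filter]
        congr 1
        ext k
        simp [and_comm]
    _ = F n - F l := Finset.sum_Ico_sub F hl
    _ = _ := by simp [F, hl]; rfl

end

/-- ordered index sets; for any decoder `φ` with
`ε = Prob(φ(AX,Y) ≠ X) > 0`,
`Σ_{i=l+1}^n H(C_i|C_1^{i-1},Y) ≤ ε (n + log(1/ε) + log e)`, logs in base `|𝒳|`. -/
theorem stmt11
    {𝒳 𝒴 : Type*} [Fintype 𝒳] [Fintype 𝒴]
    (hcard : 2 ≤ Fintype.card 𝒳)
    (n l : ℕ) (hl : l ≤ n)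
    (μ : ((Fin n → 𝒳) × (Fin n → 𝒴)) → ℝ)
    (hμ0 : ∀ ω, 0 ≤ μ ω) (hμ1 : ∑ ω, μ ω = 1)
    (A : (Fin n → 𝒳) → (Fin l → 𝒳))
    (T : (Fin n → 𝒳) ≃ (Fin n → 𝒳))
    (hT1 : ∀ x (j : Fin l), T x (Fin.castLE hl j) = A x j)
    (φ : (Fin l → 𝒳) → (Fin n → 𝒴) → (Fin n → 𝒳))
    (ε : ℝ)
    (hε : ε = probOf μ {ω | φ (A ω.1) ω.2 ≠ ω.1})
    (hpos : 0 < ε) :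
    ∑ i ∈ Finset.univ.filter (fun i : Fin n => l ≤ i.1),
        condEntropyOf μ (fun ω => T ω.1 i)
          (fun ω => (prefixVec (T ω.1) i.1 i.2.le, ω.2)) /
            Real.log (Fintype.card 𝒳) ≤
      ε * ((n : ℝ) + Real.log (1 / ε) / Real.log (Fintype.card 𝒳) +
        1 / Real.log (Fintype.card 𝒳)) := by
  have : Nonempty 𝒳 := Fintype.card_pos_iff.mp (by omega)
  have hL : 0 < log (Fintype.card 𝒳) := log_pos (by exact_mod_cast hcard)
  have hprefix : ∀ x, prefixVec (T x) l hl = A x := fun x => funext (hT1 x)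
  have hdecode :
      entropyOf μ (fun ω => (T ω.1, ω.2)) = entropyOf μ (fun ω => (ω.1, (A ω.1, ω.2))) := by
    have hinj : Function.Injective fun vy : (Fin n → 𝒳) × (Fin n → 𝒴) =>
        (T.symm vy.1, (A (T.symm vy.1), vy.2)) :=
      fun a b h => Prod.ext (T.symm.injective (congrArg Prod.fst h)) (congrArg (·.2.2) h)
    simpa only [Equiv.symm_apply_apply] using
      (entropyOf_comp_injective (p := μ) (fun ω => (T ω.1, ω.2)) hinj).symm
  have hlog_card : log (Fintype.card (Fin n → 𝒳)) = n * log (Fintype.card 𝒳) := by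
    simp [log_pow]
  have hfano := condEntropyOf_le_fano hμ0 hμ1 (fun ω => ω.1) (fun ω => (A ω.1, ω.2))
    (fun w => φ w.1 w.2) hε.symm hpos
  rw [← Finset.sum_div, div_le_iff₀ hL, sum_condEntropyOf_prefixVec hl, hdecode]
  simp only [hprefix]
  refine hfano.trans_eq ?_
  rw [hlog_card]
  field_simp
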